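/- arXiv:2202.08161 — 6 statements merged into one kernel-verified Lean document; each statement's English description precedes it below -/
import Mathlib

section
/- Let x ∈ X and y ∈ F(x). Then F admits a disparate selection s with s(x) = y if and only if the complement mapping F_{{x},{(x,y)}} admits a disparate selection. -/
/-! The graph of a selection is disparate exactly when the selection is a proper colouring of
`G`. The complement mapping forbids the value `y` at the neighbours of `x`, so a proper selection
of it, updated to `y` at `x`, is still proper; conversely a proper selection through `(x, y)`
never takes the value `y` next to `x`. -/

open Set

/-- Two points of `X × Y` are disparate: they are distinct, and if their second
coordinates agree then their first coordinates are not adjacent in `G`. -/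
def Disparate {X Y : Type*} (G : SimpleGraph X) (a b : X × Y) : Prop :=
  a ≠ b ∧ (a.2 = b.2 → ¬ G.Adj a.1 b.1)

/-- A set `A ⊆ X × Y` is disparate if any two distinct points of `A` are disparate. -/
def DisparateSet {X Y : Type*} (G : SimpleGraph X) (A : Set (X × Y)) : Prop :=
  ∀ a ∈ A, ∀ b ∈ A, a ≠ b → Disparate G a b

/-- The hull of `A`: all points that fail to be disparate from some point of `A`. -/
def dispHull {X Y : Type*} (G : SimpleGraph X) (A : Set (X × Y)) : Set (X × Y) :=
  {a | ∃ a' ∈ A, ¬ Disparate G a a'}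

/-- The complement of `A`: all points disparate from every point of `A`. -/
def dispCompl {X Y : Type*} (G : SimpleGraph X) (A : Set (X × Y)) : Set (X × Y) :=
  {a | ∀ a' ∈ A, Disparate G a a'}

/-- The graph of the restriction of a set-valued mapping `F` to `V`. -/
def svGraphOn {X Y : Type*} (F : X → Set Y) (V : Set X) : Set (X × Y) :=
  {p | p.1 ∈ V ∧ p.2 ∈ F p.1}

/-- The graph of the complement mapping `F_{W,Z}`, namely
`G(F|_{X∖W}) ∩ compl(Z)`. -/
def complMapGraph {X Y : Type*} (G : SimpleGraph X) (F : X → Set Y) (W : Set X)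
    (Z : Set (X × Y)) : Set (X × Y) :=
  svGraphOn F Wᶜ ∩ dispCompl G Z

/-- The graph `{(x, s x) : x ∈ V}` of the restriction of a point-valued map `s` to `V`. -/
def selGraphOn {X Y : Type*} (s : X → Y) (V : Set X) : Set (X × Y) :=
  {p | p.1 ∈ V ∧ p.2 = s p.1}

/-- `size(S)`: the maximum cardinality of a disparate subset of `S`. -/
noncomputable def dispSize {X Y : Type*} (G : SimpleGraph X) (S : Set (X × Y)) : ℕ :=
  sSup {n | ∃ A ⊆ S, DisparateSet G A ∧ A.ncard = n}

/-- The graph `(X, E)` is transitive. -/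
def GraphTransitive {X : Type*} (G : SimpleGraph X) : Prop :=
  ∀ ⦃x x' x'' : X⦄, G.Adj x x' → G.Adj x' x'' → x ≠ x'' → G.Adj x x''

section

variable {X Y : Type*} (G : SimpleGraph X)

theorem disparateSet_selGraphOn_iff (s : X → Y) (V : Set X) :
    DisparateSet G (selGraphOn s V) ↔ ∀ a ∈ V, ∀ b ∈ V, G.Adj a b → s a ≠ s b := by
  constructor
  · intro h a ha b hb hab hs
    exact (h (a, s a) ⟨ha, rfl⟩ (b, s b) ⟨hb, rfl⟩ (by simp [hab.ne])).2 hs hab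
  · rintro h ⟨a, _⟩ ⟨ha, hsa⟩ ⟨b, _⟩ ⟨hb, hsb⟩ hne
    dsimp only at ha hsa hb hsb
    subst hsa hsb
    exact ⟨hne, fun hs hab => h a ha b hb hab hs⟩

theorem mk_mem_complMapGraph_singleton_iff (F : X → Set Y) {x z : X} {y w : Y} :
    (z, w) ∈ complMapGraph G F {x} {(x, y)} ↔ z ≠ x ∧ w ∈ F z ∧ (w = y → ¬ G.Adj z x) := by
  simp only [complMapGraph, svGraphOn, dispCompl, Disparate, mem_inter_iff, mem_ofPred_eq,
    mem_compl_iff, mem_singleton_iff, forall_eq, ne_eq, Prod.mk.injEq]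
  tauto

theorem update_adj_ne_of_adj_ne [DecidableEq X] {s : X → Y} {x : X} {y : Y}
    (hs : ∀ a ≠ x, ∀ b ≠ x, G.Adj a b → s a ≠ s b) (hx : ∀ z, G.Adj z x → s z ≠ y)
    {a b : X} (hab : G.Adj a b) : Function.update s x y a ≠ Function.update s x y b := by
  by_cases ha : a = x <;> by_cases hb : b = x
  · exact absurd (ha.trans hb.symm) hab.ne
  · subst ha
    simpa [hb] using (hx b hab.symm).symm
  · subst hb
    simpa [ha] using hx a hab
  · simpa [ha, hb] using hs a ha b hb hab

end

theorem disparate_selection_through_point_iff_general {X Y : Type*}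
    (G : SimpleGraph X) (F : X → Set Y) (x : X) (y : Y) (hy : y ∈ F x) :
    (∃ s : X → Y, (∀ z, s z ∈ F z) ∧ DisparateSet G (selGraphOn s Set.univ) ∧ s x = y) ↔
      (∃ s' : X → Y, (∀ z, z ≠ x → (z, s' z) ∈ complMapGraph G F {x} {(x, y)}) ∧
        DisparateSet G (selGraphOn s' ({x} : Set X)ᶜ)) := by
  classical
  simp only [disparateSet_selGraphOn_iff, mk_mem_complMapGraph_singleton_iff, mem_univ,
    mem_compl_singleton_iff, forall_const]
  constructor
  · rintro ⟨s, hF, hproper, rfl⟩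
    exact ⟨s, fun z hz => ⟨hz, hF z, fun he hzx => hproper z x hzx he⟩,
      fun a _ b _ => hproper a b⟩
  · rintro ⟨s', hs', hproper⟩
    refine ⟨Function.update s' x y, ?_, fun a b => update_adj_ne_of_adj_ne G hproper
      (fun z hzx hzy => (hs' z hzx.ne).2.2 hzy hzx), by simp⟩
    exact Function.forall_update_iff s' (p := fun z w => w ∈ F z) |>.2
      ⟨hy, fun z hz => (hs' z hz).2.1⟩

/-- `F` admits a disparate selection `s` with `s x = y` iff the complement mapping
`F_{{x},{(x,y)}}` admits a disparate selection (a map defined on `X ∖ {x}`). -/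
theorem disparate_selection_through_point_iff {X Y : Type*} [Fintype X] [Fintype Y]
    (G : SimpleGraph X) (F : X → Set Y) (x : X) (y : Y) (hy : y ∈ F x) :
    (∃ s : X → Y, (∀ z, s z ∈ F z) ∧ DisparateSet G (selGraphOn s Set.univ) ∧ s x = y) ↔
      (∃ s' : X → Y, (∀ z, z ≠ x → (z, s' z) ∈ complMapGraph G F {x} {(x, y)}) ∧
        DisparateSet G (selGraphOn s' ({x} : Set X)ᶜ)) :=
  disparate_selection_through_point_iff_general G F x y hy
end

section
/- Let W ⊆ X be nonempty, let Z ⊆ G(F|_W), and let s be a selection of F such that: s|_W is disparate, the graph of s|_W is contained in Z, s|_{X∖W} is disparate, and s|_{X∖W} is a selection of the complement mapping F_{W,Z}. Then s is a disparate selection of F. -/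
open Set

section

variable {X Y : Type*} {G : SimpleGraph X}

theorem Disparate.symm {a b : X × Y} (h : Disparate G a b) : Disparate G b a :=
  ⟨h.1.symm, fun hy hadj => h.2 hy.symm hadj.symm⟩

theorem dispCompl_anti {A B : Set (X × Y)} (hAB : A ⊆ B) : dispCompl G B ⊆ dispCompl G A :=
  fun _ ha a' ha' => ha a' (hAB ha')

theorem DisparateSet.union {A B : Set (X × Y)} (hA : DisparateSet G A) (hB : DisparateSet G B)
    (hBA : B ⊆ dispCompl G A) : DisparateSet G (A ∪ B) := by
  rintro a (ha | ha) b (hb | hb) hne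
  · exact hA a ha b hb hne
  · exact (hBA hb a ha).symm
  · exact hBA ha b hb
  · exact hB a ha b hb hne

theorem selGraphOn_univ_eq_union (s : X → Y) (W : Set X) :
    selGraphOn s univ = selGraphOn s W ∪ selGraphOn s Wᶜ := by
  ext ⟨x, y⟩
  by_cases hx : x ∈ W <;> simp [selGraphOn, hx]

end

theorem disparate_selection_glue_general {X Y : Type*}
    (G : SimpleGraph X) (F : X → Set Y) (W : Set X)
    (Z : Set (X × Y))
    (s : X → Y)
    (h1 : DisparateSet G (selGraphOn s W))
    (h2 : selGraphOn s W ⊆ Z)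
    (h3 : DisparateSet G (selGraphOn s Wᶜ))
    (h4 : ∀ x ∉ W, (x, s x) ∈ complMapGraph G F W Z) :
    DisparateSet G (selGraphOn s Set.univ) := by
  rw [selGraphOn_univ_eq_union s W]
  refine h1.union h3 ?_
  rintro ⟨x, y⟩ ⟨hx : x ∉ W, hy : y = s x⟩
  subst hy
  exact dispCompl_anti h2 (h4 x hx).2

/-- If `s|_W` is disparate with graph inside `Z`, and `s|_{X∖W}` is a disparate
selection of the complement mapping `F_{W,Z}`, then `s` is a disparate selection of `F`. -/
theorem disparate_selection_glue {X Y : Type*} [Fintype X] [Fintype Y]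
    (G : SimpleGraph X) (F : X → Set Y) (W : Set X) (hW : W.Nonempty)
    (Z : Set (X × Y)) (hZ : Z ⊆ svGraphOn F W)
    (s : X → Y) (hsel : ∀ x, s x ∈ F x)
    (h1 : DisparateSet G (selGraphOn s W))
    (h2 : selGraphOn s W ⊆ Z)
    (h3 : DisparateSet G (selGraphOn s Wᶜ))
    (h4 : ∀ x ∉ W, (x, s x) ∈ complMapGraph G F W Z) :
    DisparateSet G (selGraphOn s Set.univ) :=
  disparate_selection_glue_general G F W Z s h1 h2 h3 h4
end

section
/- Let (X,E) be transitive, let A ⊆ X × Y be a disparate set and let b ∈ X × Y. Then #(A ∩ hull({b})) ≤ 1. -/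
open Set

theorem not_disparate_iff {X Y : Type*} {G : SimpleGraph X} {a b : X × Y} :
    ¬ Disparate G a b ↔ a = b ∨ (a.2 = b.2 ∧ G.Adj a.1 b.1) := by
  simp only [Disparate, not_and]
  tauto

theorem mem_dispHull_singleton {X Y : Type*} {G : SimpleGraph X} {a b : X × Y} :
    a ∈ dispHull G {b} ↔ a = b ∨ (a.2 = b.2 ∧ G.Adj a.1 b.1) := by
  simp only [dispHull, mem_singleton_iff, exists_eq_left, mem_ofPred_eq, not_disparate_iff]

theorem DisparateSet.inter_subsingleton {X Y : Type*} {G : SimpleGraph X} {A S : Set (X × Y)}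
    (hA : DisparateSet G A) (hS : S.Pairwise fun a c => ¬ Disparate G a c) :
    (A ∩ S).Subsingleton := by
  rintro a ⟨haA, haS⟩ c ⟨hcA, hcS⟩
  by_contra hne
  exact hS haS hcS hne (hA a haA c hcA hne)

/-- Any two distinct points of `hull {b}` lie in the fibre of `b.2` and are joined to `b.1`
(or equal to `b`), so transitivity makes them adjacent. -/
theorem GraphTransitive.pairwise_not_disparate_dispHull_singleton {X Y : Type*}
    {G : SimpleGraph X} (hG : GraphTransitive G) (b : X × Y) :
    (dispHull G {b}).Pairwise fun a c => ¬ Disparate G a c := by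
  intro a ha c hc hne
  rw [not_disparate_iff]
  rw [mem_dispHull_singleton] at ha hc
  rcases ha with rfl | ⟨ha2, hab⟩ <;> rcases hc with rfl | ⟨hc2, hcb⟩
  · exact absurd rfl hne
  · exact Or.inr ⟨hc2.symm, hcb.symm⟩
  · exact Or.inr ⟨ha2, hab⟩
  · have h2 : a.2 = c.2 := ha2.trans hc2.symm
    exact Or.inr ⟨h2, hG hab hcb.symm fun h1 => hne (Prod.ext h1 h2)⟩

theorem disparate_inter_hull_singleton_general {X Y : Type*}
    (G : SimpleGraph X) (hG : GraphTransitive G)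
    (A : Set (X × Y)) (hA : DisparateSet G A) (b : X × Y) :
    (A ∩ dispHull G {b}).ncard ≤ 1 := by
  have hsub := hA.inter_subsingleton (hG.pairwise_not_disparate_dispHull_singleton b)
  have := hsub.finite.to_subtype
  exact ncard_le_one_iff_subsingleton.mpr hsub

/-- On a transitive graph, a disparate set meets the hull of a singleton in at most
one point. -/
theorem disparate_inter_hull_singleton {X Y : Type*} [Fintype X] [Fintype Y]
    (G : SimpleGraph X) (hG : GraphTransitive G)
    (A : Set (X × Y)) (hA : DisparateSet G A) (b : X × Y) :
    (A ∩ dispHull G {b}).ncard ≤ 1 :=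
  disparate_inter_hull_singleton_general G hG A hA b
end

section
/- Let (X,E) be transitive, let W ⊆ X be nonempty and let (x,y) ∈ (X∖W) × Y. Then size(G(F|_W)) ≤ size(G((F_{{x},{(x,y)}})|_W)) + 1. -/
/-!
The points that fail to be disparate from `(x, y)` are `(x, y)` itself and the `(x', y)` with `x'`
adjacent to `x`; by transitivity no two of them are disparate, so a disparate set `A ⊆ G(F|_W)`
contains at most one. Discarding it leaves a disparate subset of the graph of `F_{{x},{(x,y)}}`
restricted to `W`, because `x ∉ W`.
-/

open Set

section

variable {X Y : Type*} {G : SimpleGraph X}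

theorem DisparateSet.mono {A B : Set (X × Y)} (hB : DisparateSet G B) (hAB : A ⊆ B) :
    DisparateSet G A :=
  fun a ha b hb hab ↦ hB a (hAB ha) b (hAB hb) hab

theorem compl_dispHull (A : Set (X × Y)) : (dispHull G A)ᶜ = dispCompl G A := by
  ext a
  simp [dispHull, dispCompl]

theorem ncard_le_dispSize [Finite X] [Finite Y] {A S : Set (X × Y)} (hAS : A ⊆ S)
    (hA : DisparateSet G A) : A.ncard ≤ dispSize G S :=
  le_csSup ⟨Nat.card (X × Y), by rintro n ⟨B, -, -, rfl⟩; exact ncard_le_card B⟩ ⟨A, hAS, hA, rfl⟩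

theorem dispSize_le {S : Set (X × Y)} {n : ℕ}
    (h : ∀ A ⊆ S, DisparateSet G A → A.ncard ≤ n) : dispSize G S ≤ n :=
  csSup_le ⟨0, ∅, empty_subset S, fun _ ha ↦ ha.elim, ncard_empty _⟩
    (by rintro m ⟨A, hAS, hA, rfl⟩; exact h A hAS hA)

theorem DisparateSet.subsingleton_inter_dispHull_singleton (hG : GraphTransitive G)
    {A : Set (X × Y)} (hA : DisparateSet G A) (p : X × Y) :
    (A ∩ dispHull G {p}).Subsingleton := by
  have eq_or_adj : ∀ a ∈ dispHull G {p}, a = p ∨ (a.2 = p.2 ∧ G.Adj a.1 p.1) := by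
    rintro a ⟨_, rfl, hap⟩
    simp only [Disparate, not_and] at hap
    tauto
  rintro a ⟨haA, ha⟩ b ⟨hbA, hb⟩
  by_contra hab
  obtain ⟨-, hcoord⟩ := hA a haA b hbA hab
  rcases eq_or_adj a ha with rfl | ⟨ha2, hap⟩ <;> rcases eq_or_adj b hb with rfl | ⟨hb2, hbp⟩
  · exact hab rfl
  · exact hcoord hb2.symm hbp.symm
  · exact hcoord ha2 hap
  · have h2 : a.2 = b.2 := ha2.trans hb2.symm
    exact hcoord h2 (hG hap hbp.symm fun h1 ↦ hab (Prod.ext h1 h2))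

theorem svGraphOn_diff_dispHull_subset {F : X → Set Y} {W U : Set X} (hWU : Disjoint W U)
    (Z : Set (X × Y)) :
    svGraphOn F W \ dispHull G Z ⊆ complMapGraph G F U Z ∩ {p : X × Y | p.1 ∈ W} := by
  rintro a ⟨⟨haW, haF⟩, haZ⟩
  refine ⟨⟨⟨hWU.notMem_of_mem_left haW, haF⟩, ?_⟩, haW⟩
  rwa [← compl_dispHull]

end

theorem size_le_size_complMap_add_one_general {X Y : Type*} [Fintype X] [Fintype Y]
    (G : SimpleGraph X) (hG : GraphTransitive G) (F : X → Set Y)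
    (W : Set X) (x : X) (hx : x ∉ W) (y : Y) :
    dispSize G (svGraphOn F W) ≤
      dispSize G (complMapGraph G F {x} {(x, y)} ∩ {p : X × Y | p.1 ∈ W}) + 1 := by
  refine dispSize_le fun A hAS hA ↦ ?_
  set H := dispHull G {(x, y)}
  have hkept : A \ H ⊆ complMapGraph G F {x} {(x, y)} ∩ {p : X × Y | p.1 ∈ W} :=
    (sdiff_subset_sdiff_left hAS).trans
      (svGraphOn_diff_dispHull_subset (disjoint_singleton_right.mpr hx) _)
  have hdropped : (A ∩ H).ncard ≤ 1 :=
    ncard_le_one_iff_subsingleton.mpr (hA.subsingleton_inter_dispHull_singleton hG (x, y))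
  calc A.ncard = (A \ H).ncard + (A ∩ H).ncard := by
        rw [add_comm, ncard_inter_add_ncard_sdiff_eq_ncard]
    _ ≤ _ := add_le_add (ncard_le_dispSize hkept (hA.mono sdiff_subset)) hdropped

/-- On a transitive graph, removing one point `(x,y)` outside `W` via the complement
mapping decreases the size of the restricted graph by at most one. -/
theorem size_le_size_complMap_add_one {X Y : Type*} [Fintype X] [Fintype Y]
    (G : SimpleGraph X) (hG : GraphTransitive G) (F : X → Set Y)
    (W : Set X) (hW : W.Nonempty) (x : X) (hx : x ∉ W) (y : Y) :
    dispSize G (svGraphOn F W) ≤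
      dispSize G (complMapGraph G F {x} {(x, y)} ∩ {p : X × Y | p.1 ∈ W}) + 1 :=
  size_le_size_complMap_add_one_general G hG F W x hx y
end

section
/- In Ryser's model, F admits a Hall collection if and only if N(v) ≥ r + s − n for every value v ∈ {1,…,n}. -/
open Set

/-- The graph of Ryser's model: vertices are pairs `(v, ρ)` where the value `v` does
not occur in row `ρ` of the array `L`; two vertices are adjacent iff they carry the
same value and distinct rows. -/
def ryserGraph (n r s : ℕ) (L : Fin r → Fin s → Fin n) :
    SimpleGraph {p : Fin n × Fin r // ∀ j, L p.2 j ≠ p.1} where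
  Adj a b := a.val.1 = b.val.1 ∧ a.val.2 ≠ b.val.2
  symm := ⟨fun a b h => ⟨h.1.symm, h.2.symm⟩⟩
  loopless := ⟨fun a h => h.2 rfl⟩


/-!
The Ryser graph is a disjoint union of cliques, one for each value `v`, with vertex set
`{v} × R(v)`; since the rows of `L` are injective, `#R(v) = r - N(v)`. Above a clique, the
points of a disparate set have pairwise distinct second coordinates, so a Hall collection
forces `#R(v) ≤ #Y = n - s`. Conversely, if every `R(v)` injects into `Y`, these injections
form a proper `Y`-colouring `c` of the graph, and `{(x, c x) : x ∈ V}` is a disparate set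
of size `#V` for every `V`.
-/

/-- Admitting a Hall collection, for a constant mapping `F ≡ Y`, where `G(F|_V) = V ×ˢ univ`. -/
def HasHallCollection {X : Type*} (G : SimpleGraph X) (Y : Type*) : Prop :=
  ∀ V : Set X, V.Nonempty → ∃ A ⊆ V ×ˢ (univ : Set Y), DisparateSet G A ∧ V.ncard ≤ A.ncard

section Disparate

variable {X Y : Type*} {G : SimpleGraph X}

theorem DisparateSet.injOn_snd {A : Set (X × Y)} {V : Set X} (hA : DisparateSet G A)
    (hAV : A ⊆ V ×ˢ univ) (hV : G.IsClique V) : InjOn Prod.snd A := by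
  intro a ha b hb hab
  by_contra hne
  have hfst : a.1 ≠ b.1 := fun h => hne (Prod.ext h hab)
  exact (hA a ha b hb hne).2 hab (hV (hAV ha).1 (hAV hb).1 hfst)

theorem HasHallCollection.ncard_le_card_of_isClique [Finite Y] (H : HasHallCollection G Y)
    {V : Set X} (hV : G.IsClique V) : V.ncard ≤ Nat.card Y := by
  rcases V.eq_empty_or_nonempty with rfl | hne
  · simp
  obtain ⟨A, hAV, hA, hcard⟩ := H V hne
  calc V.ncard ≤ A.ncard := hcard
    _ ≤ (univ : Set Y).ncard :=
      ncard_le_ncard_of_injOn Prod.snd (fun _ _ => mem_univ _) (hA.injOn_snd hAV hV)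
    _ = Nat.card Y := ncard_univ Y

theorem SimpleGraph.Coloring.disparateSet_image (C : G.Coloring Y) (V : Set X) :
    DisparateSet G ((fun x => (x, C x)) '' V) := by
  rintro _ ⟨x, -, rfl⟩ _ ⟨x', -, rfl⟩ hne
  exact ⟨hne, fun hc hadj => C.valid hadj hc⟩

theorem SimpleGraph.Coloring.hasHallCollection (C : G.Coloring Y) : HasHallCollection G Y := by
  intro V _
  refine ⟨(fun x => (x, C x)) '' V, ?_, C.disparateSet_image V, ?_⟩
  · rintro _ ⟨x, hx, rfl⟩
    exact ⟨hx, mem_univ _⟩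
  · rw [ncard_image_of_injective V fun x x' h => congrArg Prod.fst h]

end Disparate

theorem ncard_occurrences_add_card_avoiding_rows {ι κ α : Type*} [Finite ι] (L : ι → κ → α)
    (hrow : ∀ i, Function.Injective (L i)) (v : α) :
    {p : ι × κ | L p.1 p.2 = v}.ncard + Nat.card {i // ∀ j, L i j ≠ v} = Nat.card ι := by
  have hfst : InjOn Prod.fst {p : ι × κ | L p.1 p.2 = v} := by
    rintro ⟨i, j⟩ hij ⟨i', j'⟩ hij' (rfl : i = i')
    exact Prod.ext rfl (hrow i (hij.trans hij'.symm))
  have himage : Prod.fst '' {p : ι × κ | L p.1 p.2 = v} = {i | ∀ j, L i j ≠ v}ᶜ := by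
    ext i
    simp
  rw [← hfst.ncard_image, himage, add_comm, ← ncard_add_ncard_compl {i | ∀ j, L i j ≠ v}]
  rfl

theorem Fin.card_subtype_le_val (n s : ℕ) : Nat.card {c : Fin n // s ≤ (c : ℕ)} = n - s := by
  have h := Finset.card_filter_add_card_filter_not (s := Finset.univ) (p := fun c : Fin n => c < s)
  simp only [not_lt, Fin.card_filter_val_lt, Finset.card_univ, Fintype.card_fin] at h
  rw [Nat.card_eq_fintype_card, Fintype.card_subtype]
  omega

section Ryser

variable {n r s : ℕ} (L : Fin r → Fin s → Fin n)

def ryserFiber (v : Fin n) : Set {p : Fin n × Fin r // ∀ j, L p.2 j ≠ p.1} :=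
  range fun ρ : {ρ : Fin r // ∀ j, L ρ j ≠ v} => ⟨(v, ρ.1), ρ.2⟩

theorem ncard_ryserFiber (v : Fin n) :
    (ryserFiber L v).ncard = Nat.card {ρ : Fin r // ∀ j, L ρ j ≠ v} := by
  rw [ryserFiber, ncard_range_of_injective]
  intro ρ ρ' h
  exact Subtype.ext (congrArg (fun x => x.val.2) h)

theorem isClique_ryserFiber (v : Fin n) : (ryserGraph n r s L).IsClique (ryserFiber L v) := by
  rintro _ ⟨ρ, rfl⟩ _ ⟨ρ', rfl⟩ hne
  exact ⟨rfl, fun h => hne (by rw [Subtype.ext h])⟩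

noncomputable def ryserColoring {Y : Type*}
    (e : ∀ v : Fin n, {ρ : Fin r // ∀ j, L ρ j ≠ v} ↪ Y) : (ryserGraph n r s L).Coloring Y :=
  SimpleGraph.Coloring.mk (fun x => e x.val.1 ⟨x.val.2, x.prop⟩) <| by
    rintro ⟨⟨v, ρ⟩, hx⟩ ⟨⟨v', ρ'⟩, hx'⟩ ⟨hv, hρ⟩ hc
    obtain rfl : v = v' := hv
    exact hρ (congrArg Subtype.val ((e v).injective hc))

theorem hasHallCollection_ryserGraph_iff {Y : Type*} [Finite Y] :
    HasHallCollection (ryserGraph n r s L) Y ↔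
      ∀ v, Nat.card {ρ : Fin r // ∀ j, L ρ j ≠ v} ≤ Nat.card Y := by
  refine ⟨fun H v => ?_, fun h => ?_⟩
  · rw [← ncard_ryserFiber]
    exact H.ncard_le_card_of_isClique (isClique_ryserFiber L v)
  · have : Fintype Y := .ofFinite Y
    simp only [Nat.card_eq_fintype_card] at h
    exact (ryserColoring L fun v =>
      (Function.Embedding.nonempty_of_card_le (h v)).some).hasHallCollection

end Ryser

theorem ryser_hall_collection_iff_general (n r s : ℕ) (hsn : s ≤ n)
    (L : Fin r → Fin s → Fin n)
    (hrow : ∀ i, Function.Injective (L i)) :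
    (∀ V : Set {p : Fin n × Fin r // ∀ j, L p.2 j ≠ p.1}, V.Nonempty →
        ∃ A ⊆ V ×ˢ (Set.univ : Set {c : Fin n // s ≤ (c : ℕ)}),
          DisparateSet (ryserGraph n r s L) A ∧ V.ncard ≤ A.ncard) ↔
      (∀ v : Fin n,
        (r : ℤ) + s - n ≤ {p : Fin r × Fin s | L p.1 p.2 = v}.ncard) := by
  change HasHallCollection (ryserGraph n r s L) {c : Fin n // s ≤ (c : ℕ)} ↔ _
  rw [hasHallCollection_ryserGraph_iff, Fin.card_subtype_le_val]
  refine forall_congr' fun v => ?_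
  have hcount := ncard_occurrences_add_card_avoiding_rows L hrow v
  rw [Nat.card_fin] at hcount
  omega

/-- In Ryser's model (with `Y = {s+1,…,n}`, i.e. the columns of index `≥ s`, and
`F ≡ Y`), `F` admits a Hall collection iff `N(v) ≥ r + s − n` for every value `v`. -/
theorem ryser_hall_collection_iff (n r s : ℕ) (hn : 0 < n) (hr : 0 < r) (hs : 0 < s)
    (hrn : r ≤ n) (hsn : s ≤ n)
    (L : Fin r → Fin s → Fin n)
    (hrow : ∀ i, Function.Injective (L i))
    (hcol : ∀ j, Function.Injective fun i => L i j) :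
    (∀ V : Set {p : Fin n × Fin r // ∀ j, L p.2 j ≠ p.1}, V.Nonempty →
        ∃ A ⊆ V ×ˢ (Set.univ : Set {c : Fin n // s ≤ (c : ℕ)}),
          DisparateSet (ryserGraph n r s L) A ∧ V.ncard ≤ A.ncard) ↔
      (∀ v : Fin n,
        (r : ℤ) + s - n ≤ {p : Fin r × Fin s | L p.1 p.2 = v}.ncard) :=
  ryser_hall_collection_iff_general n r s hsn L hrow
end

section
/- (Ryser's theorem.) Let L be an r × s array with entries in {1,…,n} (r ≤ n, s ≤ n) whose values in each row and in each column are distinct. Then L can be extended to an r × n array with entries in {1,…,n} whose values in each row and in each column are distinct (agreeing with L on the first s columns) if and only if N(v) ≥ r + s − n for every v ∈ {1,…,n}. -/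
/-!
Let `deficiency L v` be the number of rows of `L` not containing `v`. By row-injectivity
`N(v) + deficiency L v = r`, so the condition says `deficiency L v ≤ n - s`.

Necessity: every row of a completion contains `v`, and the rows of `L` lacking `v` receive it in
pairwise distinct columns among the last `n - s`.

Sufficiency: add one column at a time. In the bipartite graph joining row `i` to the symbols
missing from it, every row has degree `n - s` and every symbol degree at most `n - s`. Hall's
theorem gives a matching that covers all rows and all symbols of degree exactly `n - s`; taking it
as the new column lowers every deficiency that was maximal, so the invariant
`deficiency ≤ n - (s + 1)` holds for the new rectangle.
-/

open Set

open Finset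

namespace Finset

variable {ι α : Type*} [Fintype ι] [DecidableEq α] {t : ι → Finset α} {Δ : ℕ}

theorem card_le_card_biUnion_of_regular (hΔ : 0 < Δ) (ht : ∀ i, #(t i) = Δ)
    (hdeg : ∀ v, #{i | v ∈ t i} ≤ Δ) (A : Finset ι) : #A ≤ #(A.biUnion t) := by
  refine Nat.le_of_mul_le_mul_right (card_mul_le_card_mul (fun i v => v ∈ t i) ?_ ?_) hΔ
  · intro i hi
    rw [bipartiteAbove, filter_mem_eq_inter, inter_eq_right.2 (subset_biUnion_of_mem t hi), ht]
  · intro v _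
    exact (card_le_card (filter_subset_filter _ (subset_univ A))).trans (hdeg v)

theorem card_sdiff_biUnion_le_of_regular [Fintype α] [DecidableEq ι] (hΔ : 0 < Δ)
    (ht : ∀ i, #(t i) = Δ) (A : Finset ι) :
    #(({v | #{i | v ∈ t i} = Δ} : Finset α) \ A.biUnion t) ≤ #Aᶜ := by
  refine Nat.le_of_mul_le_mul_right (card_mul_le_card_mul (fun v i => v ∈ t i) ?_ ?_) hΔ
  · intro v hv
    simp only [mem_sdiff, mem_filter, mem_univ, true_and, mem_biUnion, not_exists, not_and] at hv
    rw [← hv.1]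
    refine card_le_card fun i hi => ?_
    simp only [bipartiteAbove, mem_filter, mem_compl, mem_univ, true_and] at hi ⊢
    exact ⟨fun hiA => hv.2 i hiA hi, hi⟩
  · intro i _
    rw [← ht i]
    exact card_le_card (fun v hv => (mem_filter.1 hv).2)

theorem exists_injective_mem_covering_maxDegree [Fintype α] (hΔ : 0 < Δ)
    (ht : ∀ i, #(t i) = Δ) (hdeg : ∀ v, #{i | v ∈ t i} ≤ Δ) :
    ∃ f : ι → α, Function.Injective f ∧ (∀ i, f i ∈ t i) ∧
      ∀ v, #{i | v ∈ t i} = Δ → v ∈ Set.range f := by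
  classical
  set C : Finset α := {v | #{i | v ∈ t i} = Δ}
  have hια : Fintype.card ι ≤ Fintype.card α :=
    (card_le_card_biUnion_of_regular hΔ ht hdeg univ).trans (card_le_univ _)
  -- Dummy vertices adjacent to all values outside `C` make a Hall matching a bijection.
  let u : ι ⊕ Fin (Fintype.card α - Fintype.card ι) → Finset α := Sum.elim t fun _ => Cᶜ
  have hall (S : Finset (ι ⊕ Fin (Fintype.card α - Fintype.card ι))) :
      #S ≤ #(S.biUnion u) := by
    have hN : S.toLeft.biUnion t ⊆ S.biUnion u := fun v hv => by
      obtain ⟨i, hi, hv⟩ := mem_biUnion.1 hv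
      exact mem_biUnion.2 ⟨.inl i, mem_toLeft.1 hi, hv⟩
    have hS := S.card_toLeft_add_card_toRight
    rcases S.toRight.eq_empty_or_nonempty with hR | ⟨k, hk⟩
    · have := card_le_card_biUnion_of_regular hΔ ht hdeg S.toLeft
      have := card_le_card hN
      rw [hR, card_empty] at hS
      omega
    · have hNC : S.toLeft.biUnion t ∪ Cᶜ ⊆ S.biUnion u :=
        union_subset hN fun v hv => mem_biUnion.2 ⟨.inr k, mem_toRight.1 hk, hv⟩
      have hcompl : (S.toLeft.biUnion t ∪ Cᶜ)ᶜ = C \ S.toLeft.biUnion t := by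
        rw [compl_union, compl_compl, inter_comm, sdiff_eq_inter_compl]
      have hcrit : #(C \ S.toLeft.biUnion t) ≤ #S.toLeftᶜ :=
        card_sdiff_biUnion_le_of_regular hΔ ht S.toLeft
      have hcover := card_le_card hNC
      have hNC_card := card_compl_add_card (S.toLeft.biUnion t ∪ Cᶜ)
      have hA_card := card_compl_add_card S.toLeft
      have hdummies := card_le_univ S.toRight
      rw [hcompl] at hNC_card
      simp only [Fintype.card_fin] at hdummies
      omega
  obtain ⟨f, hf, hfu⟩ := (all_card_le_biUnion_card_iff_exists_injective u).1 hall
  have hbij : Function.Bijective f :=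
    (Fintype.bijective_iff_injective_and_card f).2
      ⟨hf, by simp only [Fintype.card_sum, Fintype.card_fin]; omega⟩
  refine ⟨f ∘ Sum.inl, hf.comp Sum.inl_injective, fun i => hfu (.inl i), fun v hv => ?_⟩
  obtain ⟨i | k, rfl⟩ := hbij.2 v
  · exact ⟨i, rfl⟩
  · exact absurd (mem_filter.2 ⟨mem_univ _, hv⟩ : _ ∈ C) (mem_compl.1 (hfu (.inr k)))

end Finset

variable {ι κ α : Type*}

def IsLatinRect (L : ι → κ → α) : Prop :=
  (∀ i, Function.Injective (L i)) ∧ ∀ j, Function.Injective fun i => L i j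

namespace LatinRect

variable {s : ℕ}

def appendColumn (L : ι → Fin s → α) (c : ι → α) : ι → Fin (s + 1) → α :=
  fun i => Fin.snoc (L i) (c i)

@[simp]
theorem appendColumn_castSucc (L : ι → Fin s → α) (c : ι → α) (i : ι) (j : Fin s) :
    appendColumn L c i j.castSucc = L i j :=
  Fin.snoc_castSucc ..

@[simp]
theorem appendColumn_last (L : ι → Fin s → α) (c : ι → α) (i : ι) :
    appendColumn L c i (Fin.last s) = c i :=
  Fin.snoc_last ..

variable [Fintype κ] [Fintype α] [DecidableEq α]

def missing (L : ι → κ → α) (i : ι) : Finset α := (univ.image (L i))ᶜ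

def deficiency [Fintype ι] (L : ι → κ → α) (v : α) : ℕ := #{i | v ∈ missing L i}

theorem mem_missing {L : ι → κ → α} {i : ι} {v : α} :
    v ∈ missing L i ↔ ∀ j, L i j ≠ v := by
  simp [missing]

theorem card_missing {L : ι → κ → α} {i : ι} (h : Function.Injective (L i)) :
    #(missing L i) = Fintype.card α - Fintype.card κ := by
  rw [missing, card_compl, card_image_of_injective _ h, card_univ]

theorem missing_appendColumn (L : ι → Fin s → α) (c : ι → α) (i : ι) :
    missing (appendColumn L c) i = (missing L i).erase (c i) := by
  ext v
  simp [appendColumn, mem_missing, Fin.forall_fin_succ', and_comm, eq_comm]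

variable [Fintype ι]

theorem ncard_add_deficiency {L : ι → κ → α} (hrow : ∀ i, Function.Injective (L i))
    (v : α) : {p : ι × κ | L p.1 p.2 = v}.ncard + deficiency L v = Fintype.card ι := by
  have hfst : {p : ι × κ | L p.1 p.2 = v}.ncard = #{i | ∃ j, L i j = v} := by
    rw [← Set.InjOn.ncard_image (f := Prod.fst), ← Set.ncard_coe_finset]
    · congr 1; ext i; simp
    · rintro ⟨i, j⟩ hj ⟨i', j'⟩ hj' (rfl : i = i')
      exact Prod.ext rfl (hrow i (hj.trans hj'.symm))
  have := card_filter_add_card_filter_not (s := univ) fun i => ∃ j, L i j = v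
  simpa [hfst, deficiency, mem_missing] using this

theorem deficiency_appendColumn_le (L : ι → Fin s → α) (c : ι → α) (v : α) :
    deficiency (appendColumn L c) v ≤ deficiency L v :=
  card_le_card <| monotone_filter_right _ fun i => by simp [missing_appendColumn]

theorem deficiency_appendColumn_lt (L : ι → Fin s → α) {c : ι → α} {i : ι}
    (hi : c i ∈ missing L i) :
    deficiency (appendColumn L c) (c i) < deficiency L (c i) :=
  card_lt_card <| (Finset.ssubset_iff_of_subset <|
    monotone_filter_right _ fun i => by simp [missing_appendColumn]).2
      ⟨i, by simpa using hi, by simp [missing_appendColumn]⟩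

theorem exists_appendColumn {L : ι → Fin s → α} (hL : IsLatinRect L) (hs : s < Fintype.card α)
    (hdef : ∀ v, deficiency L v ≤ Fintype.card α - s) :
    ∃ c : ι → α, IsLatinRect (appendColumn L c) ∧
      ∀ v, deficiency (appendColumn L c) v ≤ Fintype.card α - (s + 1) := by
  have hcard (i : ι) : #(missing L i) = Fintype.card α - s := by
    rw [card_missing (hL.1 i), Fintype.card_fin]
  obtain ⟨c, hc, hc_mem, hc_crit⟩ :=
    exists_injective_mem_covering_maxDegree (by omega) hcard hdef
  refine ⟨c, ⟨fun i => ?_, fun j => ?_⟩, fun v => ?_⟩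
  · refine Fin.snoc_injective_iff.2 ⟨hL.1 i, ?_⟩
    rintro ⟨j, hj⟩
    exact mem_missing.1 (hc_mem i) j hj
  · induction j using Fin.lastCases with
    | last => simpa using hc
    | cast j => simpa using hL.2 j
  · by_cases hv : deficiency L v = Fintype.card α - s
    · obtain ⟨i, rfl⟩ := hc_crit v hv
      have := deficiency_appendColumn_lt L (hc_mem i)
      omega
    · have := deficiency_appendColumn_le L c v
      have := hdef v
      omega

theorem exists_extension {m : ℕ} (hm : Fintype.card α = m) (hsm : s ≤ m)
    (L : ι → Fin s → α) (hL : IsLatinRect L) (hdef : ∀ v, deficiency L v ≤ m - s) :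
    ∃ M : ι → Fin m → α, IsLatinRect M ∧ ∀ i j, M i (Fin.castLE hsm j) = L i j := by
  subst hm
  induction hsm using Nat.decreasingInduction with
  | self => exact ⟨L, hL, fun i j => by simp⟩
  | of_succ s hs ih =>
    obtain ⟨c, hc, hcdef⟩ := exists_appendColumn hL hs hdef
    obtain ⟨M, hM, hML⟩ := ih _ hc hcdef
    exact ⟨M, hM, fun i j => by simpa using hML i j.castSucc⟩

theorem deficiency_le_of_extension {m : ℕ} {L : ι → Fin s → α} {M : ι → Fin m → α}
    (hMrow : ∀ i, Function.Surjective (M i)) (hMcol : ∀ j, Function.Injective fun i => M i j)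
    (hsm : s ≤ m) (hML : ∀ i j, M i (Fin.castLE hsm j) = L i j) (v : α) :
    deficiency L v ≤ m - s := by
  choose pos hpos using fun i => hMrow i v
  calc deficiency L v ≤ #(univ.image (Fin.castLE hsm))ᶜ := by
        refine card_le_card_of_injOn pos (fun i hi => ?_) fun i _ i' _ h => hMcol (pos i) ?_
        · have hi : ∀ j, L i j ≠ v := by simpa [mem_missing] using hi
          simp only [coe_compl, coe_image, coe_univ, Set.image_univ, Set.mem_compl_iff,
            Set.mem_range, not_exists]
          exact fun j hj => hi j (by rw [← hML, hj, hpos])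
        · simp only [hpos, h ▸ hpos i']
    _ = m - s := by
        rw [card_compl, Finset.card_image_of_injective _ (Fin.castLE_injective hsm)]
        simp

end LatinRect

theorem ryser_extension_iff_general (n r s : ℕ) (hsn : s ≤ n)
    (L : Fin r → Fin s → Fin n)
    (hrow : ∀ i, Function.Injective (L i))
    (hcol : ∀ j, Function.Injective fun i => L i j) :
    (∃ M : Fin r → Fin n → Fin n,
        (∀ i, Function.Injective (M i)) ∧
        (∀ j, Function.Injective fun i => M i j) ∧
        ∀ (i : Fin r) (j : Fin s), M i (Fin.castLE hsn j) = L i j) ↔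
      (∀ v : Fin n,
        (r : ℤ) + s - n ≤ {p : Fin r × Fin s | L p.1 p.2 = v}.ncard) := by
  have hcount (v : Fin n) : (r : ℤ) + s - n ≤ {p : Fin r × Fin s | L p.1 p.2 = v}.ncard ↔
      LatinRect.deficiency L v ≤ n - s := by
    have := LatinRect.ncard_add_deficiency hrow v
    simp only [Fintype.card_fin] at this
    omega
  simp only [hcount]
  constructor
  · rintro ⟨M, hMrow, hMcol, hML⟩
    exact LatinRect.deficiency_le_of_extension
      (fun i => Finite.injective_iff_surjective.1 (hMrow i)) hMcol hsn hML
  · intro hdef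
    obtain ⟨M, ⟨hMrow, hMcol⟩, hML⟩ :=
      LatinRect.exists_extension (Fintype.card_fin n) hsn L ⟨hrow, hcol⟩ hdef
    exact ⟨M, hMrow, hMcol, hML⟩

/-- Ryser's theorem: an `r × s` partial Latin rectangle `L` with entries in
`{1,…,n}` extends to an `r × n` partial Latin rectangle iff every value `v`
occurs at least `r + s − n` times in `L`. -/
theorem ryser_extension_iff (n r s : ℕ) (hn : 0 < n) (hr : 0 < r) (hs : 0 < s)
    (hrn : r ≤ n) (hsn : s ≤ n)
    (L : Fin r → Fin s → Fin n)
    (hrow : ∀ i, Function.Injective (L i))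
    (hcol : ∀ j, Function.Injective fun i => L i j) :
    (∃ M : Fin r → Fin n → Fin n,
        (∀ i, Function.Injective (M i)) ∧
        (∀ j, Function.Injective fun i => M i j) ∧
        ∀ (i : Fin r) (j : Fin s), M i (Fin.castLE hsn j) = L i j) ↔
      (∀ v : Fin n,
        (r : ℤ) + s - n ≤ {p : Fin r × Fin s | L p.1 p.2 = v}.ncard) :=
  ryser_extension_iff_general n r s hsn L hrow hcol
end
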